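/- Let q ∈ (0,1]. For every Laurent polynomial f = ∑_{n=-N}^{N} α_n z^n, the following Poincaré-type inequality holds: ‖f - h(f)·1‖_∞ ≤ (π/√3)·‖d_q(f)‖_∞, where h(f) = α_0 is the Haar state (constant Fourier coefficient), d_q(z^n) = i[n]_q z^n, and ‖·‖_∞ is the supremum norm on the unit circle. -/

import Mathlib

set_option maxHeartbeats 1000000

lemma pow_sub_inv_pow_ge (x : ℝ) (hx : 1 ≤ x) (n : ℕ) :
    (n : ℝ) * (x - x⁻¹) ≤ x ^ n - x⁻¹ ^ n := by
  have hx0 : (0:ℝ) < x := lt_of_lt_of_le one_pos hx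
  have hxy : x * x⁻¹ = 1 := mul_inv_cancel₀ (ne_of_gt hx0)
  have hy1 : x⁻¹ ≤ 1 := inv_le_one_of_one_le₀ hx
  have hy0 : (0:ℝ) < x⁻¹ := by positivity
  induction n with
  | zero => simp
  | succ n ih =>
    have hxn : 1 ≤ x ^ n := one_le_pow₀ hx
    have hxyn : x⁻¹ ^ n * x ^ n = 1 := by
      rw [← mul_pow, inv_mul_cancel₀ (ne_of_gt hx0), one_pow]
    have hyx : x⁻¹ ≤ x ^ n := le_trans hy1 hxn
    have key : 1 + x⁻¹ ≤ x ^ n + x⁻¹ ^ n * x⁻¹ := by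
      nlinarith [mul_nonneg (mul_nonneg (pow_pos hy0 n).le
        (sub_nonneg.2 hxn)) (sub_nonneg.2 hyx), hxyn]
    have e1 : x ^ (n+1) - x⁻¹ ^ (n+1) - (x ^ n - x⁻¹ ^ n) = (x-1)*(x ^ n + x⁻¹ ^ n * x⁻¹) := by
      have hstep : x⁻¹ ^ n = x * (x⁻¹ ^ n * x⁻¹) := by
        linear_combination (-(x⁻¹ ^ n)) * hxy
      rw [pow_succ x⁻¹]
      linear_combination (-(x⁻¹ ^ n)) * hxy
    have e2 : x - x⁻¹ = (x-1)*(1+x⁻¹) := by linear_combination (-1:ℝ) * hxy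
    have h3 : (x-1)*(1+x⁻¹) ≤ (x-1)*(x ^ n + x⁻¹ ^ n * x⁻¹) :=
      mul_le_mul_of_nonneg_left key (by linarith)
    push_cast
    nlinarith

/-- The `q`-integer `[n]_q` for `q ∈ (0,1]`, with `[n]_1 = n`. -/
noncomputable def qInt (q : ℝ) (n : ℤ) : ℝ :=
  if q = 1 then (n : ℝ) else (q ^ n - q ^ (-n)) / (q - q⁻¹)

lemma qInt_zero (q : ℝ) : qInt q 0 = 0 := by
  unfold qInt; split <;> simp

lemma qInt_neg (q : ℝ) (n : ℤ) : qInt q (-n) = -qInt q n := by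
  unfold qInt; split
  · push_cast; ring
  · rw [neg_neg, ← neg_div, neg_sub]

lemma nat_le_qInt {q : ℝ} (hq0 : 0 < q) (hq1 : q ≤ 1) (n : ℕ) : (n : ℝ) ≤ qInt q n := by
  unfold qInt
  split
  · exact le_refl _
  · rename_i hne
    have hqlt : q < 1 := lt_of_le_of_ne hq1 hne
    set x := q⁻¹ with hxdef
    have hx1 : 1 < x := one_lt_inv₀ hq0 |>.mpr hqlt
    have hq : q = x⁻¹ := (inv_inv q).symm
    have h1 : q ^ (n:ℤ) = x⁻¹ ^ n := by rw [zpow_natCast, hq]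
    have h2 : q ^ (-(n:ℤ)) = x ^ n := by
      rw [zpow_neg, zpow_natCast, ← inv_pow]
    rw [h1, h2]
    have hden : x⁻¹ - x < 0 := by
      have : x⁻¹ < 1 := inv_lt_one_of_one_lt₀ hx1
      linarith
    have : (x⁻¹ ^ n - x ^ n) / (x⁻¹ - x) = (x ^ n - x⁻¹ ^ n) / (x - x⁻¹) := by
      rw [← neg_div_neg_eq]; ring_nf
    rw [hq, this]
    rw [le_div_iff₀ (by linarith)]
    exact pow_sub_inv_pow_ge x hx1.le n

lemma sq_le_sq_qInt {q : ℝ} (hq0 : 0 < q) (hq1 : q ≤ 1) (n : ℤ) :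
    (n : ℝ) ^ 2 ≤ (qInt q n) ^ 2 := by
  obtain ⟨m, rfl | rfl⟩ := Int.eq_nat_or_neg n
  · have h := nat_le_qInt hq0 hq1 m
    push_cast
    exact pow_le_pow_left₀ (Nat.cast_nonneg m) h 2
  · rw [qInt_neg]
    push_cast
    rw [neg_sq, neg_sq]
    exact pow_le_pow_left₀ (Nat.cast_nonneg m) (nat_le_qInt hq0 hq1 m) 2

lemma qInt_ne_zero {q : ℝ} (hq0 : 0 < q) (hq1 : q ≤ 1) {n : ℤ} (hn : n ≠ 0) :
    qInt q n ≠ 0 := by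
  intro h
  have := sq_le_sq_qInt hq0 hq1 n
  rw [h] at this
  have : (n:ℝ) ^ 2 ≤ 0 := by simpa using this
  have : (n:ℝ) = 0 := by nlinarith [sq_nonneg (n:ℝ)]
  exact hn (by exact_mod_cast this)

open Real in
lemma integral_exp_int (k : ℤ) :
    ∫ θ in (0:ℝ)..(2*π), Complex.exp (Complex.I * k * θ) =
      if k = 0 then ((2*π : ℝ) : ℂ) else 0 := by
  by_cases hk : k = 0
  · subst hk; simp
  · rw [if_neg hk]
    have hc : (Complex.I * (k:ℂ)) ≠ 0 :=
      mul_ne_zero Complex.I_ne_zero (Int.cast_ne_zero.mpr hk)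
    have h := integral_exp_mul_complex (a := (0:ℝ)) (b := 2*π) hc
    simp only [mul_assoc] at h ⊢
    rw [h]
    have h2 : Complex.I * ((k:ℂ) * ((2*π:ℝ):ℂ)) = (k:ℂ) * (2*(π:ℂ)*Complex.I) := by
      push_cast; ring
    rw [h2, Complex.exp_int_mul_two_pi_mul_I]
    norm_num

open Real in
lemma basel_finite (N : ℕ) :
    ∑ n ∈ (Finset.Icc (-(N:ℤ)) N).erase 0, (1:ℝ)/(n:ℝ)^2 ≤ π^2/3 := by
  have hnat : ∀ s : Finset ℕ, ∑ k ∈ s, (1:ℝ)/(k:ℝ)^2 ≤ π^2/6 := fun s =>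
    sum_le_hasSum s (fun i _ => by positivity) hasSum_zeta_two
  have hpos : ∑ n ∈ Finset.Icc (1:ℤ) N, (1:ℝ)/(n:ℝ)^2 ≤ π^2/6 := by
    have himg : Finset.Icc (1:ℤ) N = (Finset.Icc 1 N : Finset ℕ).image (Nat.cast) := by
      ext n
      simp only [Finset.mem_Icc, Finset.mem_image]
      constructor
      · rintro ⟨h1, h2⟩
        exact ⟨n.toNat, by omega, by omega⟩
      · rintro ⟨a, ⟨h1, h2⟩, rfl⟩
        omega
    rw [himg, Finset.sum_image (by intro a _ b _ h; exact_mod_cast h)]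
    simpa using hnat (Finset.Icc 1 N)
  have hneg : ∑ n ∈ Finset.Icc (-(N:ℤ)) (-1), (1:ℝ)/(n:ℝ)^2
      = ∑ n ∈ Finset.Icc (1:ℤ) N, (1:ℝ)/(n:ℝ)^2 := by
    have himg : Finset.Icc (-(N:ℤ)) (-1) = (Finset.Icc (1:ℤ) N).image (fun n => -n) := by
      ext n
      simp only [Finset.mem_Icc, Finset.mem_image]
      constructor
      · rintro ⟨h1, h2⟩
        exact ⟨-n, by omega, by omega⟩
      · rintro ⟨a, ⟨h1, h2⟩, rfl⟩
        omega
    rw [himg, Finset.sum_image (by intro a _ b _ h; exact neg_injective h)]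
    apply Finset.sum_congr rfl
    intro n _
    push_cast
    rw [neg_sq]
  have hsplit : (Finset.Icc (-(N:ℤ)) N).erase 0
      = Finset.Icc (-(N:ℤ)) (-1) ∪ Finset.Icc 1 N := by
    ext n; simp [Finset.mem_erase, Finset.mem_Icc, Finset.mem_union]; omega
  have hdisj : Disjoint (Finset.Icc (-(N:ℤ)) (-1)) (Finset.Icc (1:ℤ) N) := by
    rw [Finset.disjoint_left]; intro a ha hb
    simp [Finset.mem_Icc] at ha hb; omega
  rw [hsplit, Finset.sum_union hdisj, hneg]
  linarith


open Real Complex in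
lemma parseval_bound (s : Finset ℤ) (β : ℤ → ℂ) (R : ℝ)
    (hR : ∀ θ : ℝ, ‖∑ n ∈ s, β n * Complex.exp (Complex.I * n * θ)‖ ≤ R) :
    ∑ n ∈ s, ‖β n‖^2 ≤ R^2 := by
  set g : ℝ → ℂ := fun θ => ∑ n ∈ s, β n * Complex.exp (Complex.I * n * θ) with hg
  have hgc : Continuous g := continuous_finset_sum _ fun n _ =>
    continuous_const.mul (Complex.continuous_exp.comp (continuous_const.mul Complex.continuous_ofReal))
  have hpt : ∀ θ : ℝ, g θ * (starRingEnd ℂ) (g θ)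
      = ∑ n ∈ s, ∑ m ∈ s, (β n * (starRingEnd ℂ) (β m)) * Complex.exp (Complex.I * ((n - m : ℤ)) * θ) := by
    intro θ
    rw [hg, map_sum, Finset.sum_mul_sum]
    refine Finset.sum_congr rfl fun n _ => Finset.sum_congr rfl fun m _ => ?_
    rw [map_mul]
    have hc : (starRingEnd ℂ) (Complex.exp (Complex.I * m * θ))
        = Complex.exp (Complex.I * (-m : ℤ) * θ) := by
      rw [← Complex.exp_conj]
      simp only [map_mul, Complex.conj_I, Complex.conj_ofReal, map_intCast]
      push_cast; ring_nf
    rw [hc, mul_mul_mul_comm, ← Complex.exp_add]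
    congr 2
    push_cast; ring
  have hint : ∀ (c : ℂ) (k : ℤ), IntervalIntegrable
      (fun θ : ℝ => c * Complex.exp (Complex.I * k * θ)) MeasureTheory.volume 0 (2*π) :=
    fun c k => (continuous_const.mul (Complex.continuous_exp.comp
      (continuous_const.mul Complex.continuous_ofReal))).intervalIntegrable _ _
  have key : (∫ θ in (0:ℝ)..(2*π), g θ * (starRingEnd ℂ) (g θ))
      = ((2*π : ℝ) : ℂ) * ∑ n ∈ s, ((‖β n‖^2 : ℝ) : ℂ) := by
    have h1 : (∫ θ in (0:ℝ)..(2*π), ∑ n ∈ s, ∑ m ∈ s,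
        (β n * (starRingEnd ℂ) (β m)) * Complex.exp (Complex.I * ((n - m : ℤ)) * θ))
        = ∑ n ∈ s, ∫ θ in (0:ℝ)..(2*π), ∑ m ∈ s,
          (β n * (starRingEnd ℂ) (β m)) * Complex.exp (Complex.I * ((n - m : ℤ)) * θ) :=
      intervalIntegral.integral_finset_sum (fun n _ =>
        (continuous_finset_sum s fun m _ => continuous_const.mul (Complex.continuous_exp.comp
          (continuous_const.mul Complex.continuous_ofReal))).intervalIntegrable _ _)
    rw [intervalIntegral.integral_congr (g := fun θ => ∑ n ∈ s, ∑ m ∈ s,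
      (β n * (starRingEnd ℂ) (β m)) * Complex.exp (Complex.I * ((n - m : ℤ)) * θ))
      (fun θ _ => hpt θ), h1]
    have hinner : ∀ n ∈ s, (∫ θ in (0:ℝ)..(2*π), ∑ m ∈ s,
        (β n * (starRingEnd ℂ) (β m)) * Complex.exp (Complex.I * ((n - m : ℤ)) * θ))
        = β n * (starRingEnd ℂ) (β n) * ((2*π : ℝ) : ℂ) := by
      intro n hn
      rw [intervalIntegral.integral_finset_sum (fun m _ => hint _ _)]
      have : ∀ m ∈ s, (∫ θ in (0:ℝ)..(2*π),
          (β n * (starRingEnd ℂ) (β m)) * Complex.exp (Complex.I * ((n - m : ℤ)) * θ))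
          = if n = m then β n * (starRingEnd ℂ) (β m) * ((2*π:ℝ):ℂ) else 0 := by
        intro m _
        rw [intervalIntegral.integral_const_mul, integral_exp_int (n - m)]
        by_cases h : n = m
        · simp [h]
        · rw [if_neg (sub_ne_zero.mpr h), if_neg h, mul_zero]
      rw [Finset.sum_congr rfl this, Finset.sum_ite_eq s n
        (fun m => β n * (starRingEnd ℂ) (β m) * ((2*π:ℝ):ℂ)), if_pos hn]
    rw [Finset.sum_congr rfl hinner]
    simp only [Complex.mul_conj, ← Finset.sum_mul]
    rw [mul_comm]
    congr 1
    refine Finset.sum_congr rfl fun n _ => ?_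
    simp [Complex.normSq_eq_norm_sq]
  have hRpos : 0 ≤ R := (norm_nonneg _).trans (hR 0)
  have hInt : IntervalIntegrable (fun θ => g θ * (starRingEnd ℂ) (g θ))
      MeasureTheory.volume 0 (2*π) :=
    (hgc.mul (continuous_star.comp hgc)).intervalIntegrable _ _
  have hre : (∫ θ in (0:ℝ)..(2*π), ‖g θ‖^2) = 2*π * ∑ n ∈ s, ‖β n‖^2 := by
    have h2 := Complex.reCLM.intervalIntegral_comp_comm hInt
    have h3 : ∀ θ : ℝ, ‖g θ‖^2 = Complex.reCLM (g θ * (starRingEnd ℂ) (g θ)) := by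
      intro θ
      simp [Complex.mul_conj, Complex.normSq_eq_norm_sq,
        ← Complex.ofReal_pow]
    calc (∫ θ in (0:ℝ)..(2*π), ‖g θ‖^2)
        = ∫ θ in (0:ℝ)..(2*π), Complex.reCLM (g θ * (starRingEnd ℂ) (g θ)) :=
          intervalIntegral.integral_congr (fun θ _ => h3 θ)
      _ = Complex.reCLM (∫ θ in (0:ℝ)..(2*π), g θ * (starRingEnd ℂ) (g θ)) := h2
      _ = 2*π * ∑ n ∈ s, ‖β n‖^2 := by
          rw [key]
          push_cast
          simp [← Complex.ofReal_pow]
  have hmono : (∫ θ in (0:ℝ)..(2*π), ‖g θ‖^2) ≤ 2*π * R^2 := by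
    have h4 := intervalIntegral.integral_mono_on (μ := MeasureTheory.volume) (a := (0:ℝ)) (b := 2*π)
      (f := fun θ => ‖g θ‖^2) (g := fun _ => R^2) (by positivity)
      (((hgc.norm).pow 2).intervalIntegrable _ _) intervalIntegrable_const
      (fun θ _ => pow_le_pow_left₀ (norm_nonneg _) (hR θ) 2)
    simpa [mul_comm] using h4
  have h2pi : (0:ℝ) < 2*π := by positivity
  have := hre ▸ hmono
  exact le_of_mul_le_mul_left this h2pi

theorem poincare_inequality (q : ℝ) (hq : q ∈ Set.Ioc (0 : ℝ) 1) (N : ℕ) (α : ℤ → ℂ) :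
    (⨆ θ : ℝ, ‖(∑ n ∈ Finset.Icc (-(N : ℤ)) N,
        α n * Complex.exp (Complex.I * n * θ)) - α 0‖) ≤
      Real.pi / Real.sqrt 3 *
        ⨆ θ : ℝ, ‖∑ n ∈ Finset.Icc (-(N : ℤ)) N,
          Complex.I * (qInt q n : ℂ) * α n * Complex.exp (Complex.I * n * θ)‖ := by
  obtain ⟨hq0, hq1⟩ := hq
  set s := Finset.Icc (-(N:ℤ)) (N:ℤ) with hs
  have h0s : (0:ℤ) ∈ s := by
    rw [hs]; simp [Finset.mem_Icc]
  have hexp1 : ∀ (n : ℤ) (θ : ℝ), ‖Complex.exp (Complex.I * n * θ)‖ = 1 := by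
    intro n θ
    have h : Complex.I * n * θ = ((n * θ : ℝ) : ℂ) * Complex.I := by push_cast; ring
    rw [h, Complex.norm_exp_ofReal_mul_I]
  have hnorm : ∀ n : ℤ, ‖Complex.I * (qInt q n : ℂ) * α n‖ = |qInt q n| * ‖α n‖ := by
    intro n
    rw [norm_mul, norm_mul, Complex.norm_I, one_mul, Complex.norm_real, Real.norm_eq_abs]
  have hBdd : BddAbove (Set.range fun θ : ℝ =>
      ‖∑ n ∈ s, Complex.I * (qInt q n : ℂ) * α n * Complex.exp (Complex.I * n * θ)‖) := by
    refine ⟨∑ n ∈ s, ‖Complex.I * (qInt q n : ℂ) * α n‖, ?_⟩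
    rintro x ⟨θ, rfl⟩
    refine le_trans (norm_sum_le _ _) (le_of_eq (Finset.sum_congr rfl fun n _ => ?_))
    rw [norm_mul, hexp1, mul_one]
  set R := ⨆ θ : ℝ, ‖∑ n ∈ s,
      Complex.I * (qInt q n : ℂ) * α n * Complex.exp (Complex.I * n * θ)‖ with hRdef
  have hRle : ∀ θ : ℝ, ‖∑ n ∈ s,
      Complex.I * (qInt q n : ℂ) * α n * Complex.exp (Complex.I * n * θ)‖ ≤ R :=
    fun θ => le_ciSup hBdd θ
  have hRpos : (0:ℝ) ≤ R := (norm_nonneg _).trans (hRle 0)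
  have hpars : ∑ n ∈ s, ‖Complex.I * (qInt q n : ℂ) * α n‖^2 ≤ R^2 :=
    parseval_bound s (fun n => Complex.I * (qInt q n : ℂ) * α n) R hRle
  have hf2 : ∑ n ∈ s.erase 0, (1/|qInt q n|)^2 ≤ Real.pi^2/3 := by
    refine le_trans (Finset.sum_le_sum fun n hn => ?_) (hs ▸ basel_finite N)
    have hn0 : n ≠ 0 := (Finset.mem_erase.mp hn).1
    have h1 : (n:ℝ)^2 ≤ (qInt q n)^2 := sq_le_sq_qInt hq0 hq1 n
    have h2 : (0:ℝ) < (n:ℝ)^2 := by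
      have : (n:ℝ) ≠ 0 := Int.cast_ne_zero.mpr hn0
      positivity
    rw [div_pow, one_pow, sq_abs]
    exact one_div_le_one_div_of_le h2 h1
  have hg2 : ∑ n ∈ s.erase 0, (|qInt q n| * ‖α n‖)^2 ≤ R^2 := by
    calc ∑ n ∈ s.erase 0, (|qInt q n| * ‖α n‖)^2
        = ∑ n ∈ s.erase 0, ‖Complex.I * (qInt q n : ℂ) * α n‖^2 :=
          Finset.sum_congr rfl (fun n _ => by rw [hnorm])
      _ ≤ ∑ n ∈ s, ‖Complex.I * (qInt q n : ℂ) * α n‖^2 :=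
          Finset.sum_le_sum_of_subset_of_nonneg (Finset.erase_subset _ _)
            (fun n _ _ => by positivity)
      _ ≤ R^2 := hpars
  have heq : ∀ n ∈ s.erase 0, (1/|qInt q n|) * (|qInt q n| * ‖α n‖) = ‖α n‖ := by
    intro n hn
    have h := qInt_ne_zero hq0 hq1 (Finset.mem_erase.mp hn).1
    have : |qInt q n| ≠ 0 := abs_ne_zero.mpr h
    field_simp
  have hsq : (∑ n ∈ s.erase 0, ‖α n‖)^2 ≤ Real.pi^2/3 * R^2 := by
    calc (∑ n ∈ s.erase 0, ‖α n‖)^2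
        = (∑ n ∈ s.erase 0, (1/|qInt q n|) * (|qInt q n| * ‖α n‖))^2 := by
          rw [Finset.sum_congr rfl heq]
      _ ≤ (∑ n ∈ s.erase 0, (1/|qInt q n|)^2) *
            ∑ n ∈ s.erase 0, (|qInt q n| * ‖α n‖)^2 :=
          Finset.sum_mul_sq_le_sq_mul_sq _ _ _
      _ ≤ Real.pi^2/3 * R^2 := by
          refine mul_le_mul hf2 hg2 ?_ (by positivity)
          positivity
  have h3 : Real.sqrt 3 ^ 2 = 3 := Real.sq_sqrt (by norm_num)
  have h3pos : (0:ℝ) < Real.sqrt 3 := Real.sqrt_pos.mpr (by norm_num)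
  have hb : (0:ℝ) ≤ Real.pi / Real.sqrt 3 * R := by positivity
  have hbsq : (Real.pi / Real.sqrt 3 * R)^2 = Real.pi^2/3 * R^2 := by
    rw [mul_pow, div_pow, h3]
  have hsum : ∑ n ∈ s.erase 0, ‖α n‖ ≤ Real.pi / Real.sqrt 3 * R := by
    have ha : (0:ℝ) ≤ ∑ n ∈ s.erase 0, ‖α n‖ :=
      Finset.sum_nonneg fun n _ => norm_nonneg _
    nlinarith [hsq, hbsq]
  refine ciSup_le fun θ => ?_
  have hsplit : (∑ n ∈ s, α n * Complex.exp (Complex.I * n * θ)) - α 0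
      = ∑ n ∈ s.erase 0, α n * Complex.exp (Complex.I * n * θ) := by
    rw [← Finset.add_sum_erase s _ h0s]
    simp
  rw [hsplit]
  refine le_trans (le_trans (norm_sum_le _ _)
    (le_of_eq (Finset.sum_congr rfl fun n _ => ?_))) hsum
  rw [norm_mul, hexp1, mul_one]
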